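/- arXiv:2410.04674 — 7 statements merged into one kernel-verified Lean document; each statement's English description precedes it below -/
import Mathlib

section
/- Let (X,d) be a quasi-metric space and let {(x_i,r_i)}_{i∈D} be a directed subset of BX, viewed as a monotone net indexed by itself. If x ∈ X is a Yoneda limit of the net {x_i}_{i∈D} and r = inf_{i∈D} r_i, then (x,r) is the least upper bound of {(x_i,r_i)}_{i∈D} in BX. -/
open scoped ENNReal NNReal

universe u v w

/-- A quasi-metric space structure on `X`: distances valued in `[0,∞]`, with
`d x x = 0`, the triangle inequality, and separatedness. -/
structure QuasiMetric (X : Type u) where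
  d : X → X → ℝ≥0∞
  d_self : ∀ x, d x x = 0
  d_triangle : ∀ x y z, d x z ≤ d x y + d y z
  d_separated : ∀ x y, d x y = 0 → d y x = 0 → x = y

namespace QuasiMetric

variable {X : Type u}

/-- The order on formal balls: `(x, r) ⊑ (y, s)` iff `s + d x y ≤ r`
(equivalently `d x y ≤ r - s`). -/
def ballLE (q : QuasiMetric X) (p p' : X × ℝ≥0) : Prop :=
  (p'.2 : ℝ≥0∞) + q.d p.1 p'.1 ≤ (p.2 : ℝ≥0∞)

/-- `b` is a least upper bound of the set `S` of formal balls. -/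
def IsBallLUB (q : QuasiMetric X) (S : Set (X × ℝ≥0)) (b : X × ℝ≥0) : Prop :=
  (∀ p ∈ S, q.ballLE p b) ∧ ∀ c, (∀ p ∈ S, q.ballLE p c) → q.ballLE b c

/-- `le` is a directed preorder (reflexive, transitive, directed). -/
def DirectedPre {D : Type v} (le : D → D → Prop) : Prop :=
  (∀ i, le i i) ∧ (∀ i j k, le i j → le j k → le i k) ∧ ∀ i j, ∃ k, le i k ∧ le j k

/-- A net `x : D → X` is forward Cauchy: `inf_i sup_{k ≥ j ≥ i} d (x j) (x k) = 0`. -/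
def ForwardCauchy (q : QuasiMetric X) {D : Type v} (le : D → D → Prop) (x : D → X) : Prop :=
  (⨅ i, ⨆ j, ⨆ (_ : le i j), ⨆ k, ⨆ (_ : le j k), q.d (x j) (x k)) = 0

/-- `a` is a Yoneda limit of the net `x : D → X`:
for all `y`, `d a y = inf_i sup_{j ≥ i} d (x j) y`. -/
def IsYonedaLimit (q : QuasiMetric X) {D : Type v} (le : D → D → Prop) (x : D → X) (a : X) :
    Prop :=
  ∀ y, q.d a y = ⨅ i, ⨆ j, ⨆ (_ : le i j), q.d (x j) y

/-- `(X, d)` is Yoneda complete: every forward Cauchy net has a Yoneda limit. -/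
def YonedaComplete (q : QuasiMetric X) : Prop :=
  ∀ (D : Type u) (le : D → D → Prop), DirectedPre le → Nonempty D →
    ∀ x : D → X, q.ForwardCauchy le x → ∃ a, q.IsYonedaLimit le x a

/-- `(X, d)` is standard: whenever a directed set of formal balls (viewed as a monotone
net indexed by itself) has a least upper bound, the corresponding forward Cauchy net of
centers has a Yoneda limit. -/
def Standard (q : QuasiMetric X) : Prop :=
  ∀ S : Set (X × ℝ≥0), S.Nonempty → DirectedOn q.ballLE S →
    (∃ b, q.IsBallLUB S b) →
    ∃ a, q.IsYonedaLimit (fun p p' : ↥S => q.ballLE p.1 p'.1) (fun p : ↥S => p.1.1) a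

/-- A weight of `(X, d)`: `φ x ≤ φ y + d x y`. -/
def IsWeight (q : QuasiMetric X) (φ : X → ℝ≥0∞) : Prop :=
  ∀ x y, φ x ≤ φ y + q.d x y

/-- The quasi-metric on weights: `ρ(φ, ψ) = sup_y (ψ y ⊖ φ y)`. -/
noncomputable def rho {Y : Type v} (φ ψ : Y → ℝ≥0∞) : ℝ≥0∞ := ⨆ y, ψ y - φ y

/-- An ideal of `(X, d)`: a weight `φ` with `inf φ = 0` such that
`ρ(φ, min (λ, μ)) = min (ρ(φ,λ), ρ(φ,μ))` for all weights `λ`, `μ`. -/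
def IsIdeal (q : QuasiMetric X) (φ : X → ℝ≥0∞) : Prop :=
  q.IsWeight φ ∧ (⨅ x, φ x) = 0 ∧
    ∀ l m : X → ℝ≥0∞, q.IsWeight l → q.IsWeight m →
      rho φ (fun x => min (l x) (m x)) = min (rho φ l) (rho φ m)

/-- A weight `φ` is bounded: there are `r < ∞` and `a ∈ X` with `d x a ≤ r + φ x` for all `x`. -/
def BoundedWeight (q : QuasiMetric X) (φ : X → ℝ≥0∞) : Prop :=
  ∃ (r : ℝ≥0) (a : X), ∀ x, q.d x a ≤ (r : ℝ≥0∞) + φ x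

/-- `b` is a colimit of the weight `φ`: for all `y`, `d b y = sup_x (d x y ⊖ φ x)`. -/
def IsColimit (q : QuasiMetric X) (φ : X → ℝ≥0∞) (b : X) : Prop :=
  ∀ y, q.d b y = ⨆ x, q.d x y - φ x

/-- The poset of formal balls is a dcpo: every (nonempty) directed subset has a lub. -/
def BallDcpo (q : QuasiMetric X) : Prop :=
  ∀ S : Set (X × ℝ≥0), S.Nonempty → DirectedOn q.ballLE S → ∃ b, q.IsBallLUB S b

/-- The poset of formal balls is a local dcpo: every (nonempty) directed subset with an
upper bound has a lub. -/
def BallLocalDcpo (q : QuasiMetric X) : Prop :=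
  ∀ S : Set (X × ℝ≥0), S.Nonempty → DirectedOn q.ballLE S →
    (∃ c, ∀ p ∈ S, q.ballLE p c) → ∃ b, q.IsBallLUB S b

/-- `u` is way below `v` in the poset of formal balls. -/
def ballWayBelow (q : QuasiMetric X) (u v : X × ℝ≥0) : Prop :=
  ∀ S : Set (X × ℝ≥0), S.Nonempty → DirectedOn q.ballLE S →
    ∀ s, q.IsBallLUB S s → q.ballLE v s → ∃ p ∈ S, q.ballLE u p

/-- The poset of formal balls is a continuous poset: for every `p`, the set of elements
way below `p` is (nonempty) directed and has `p` as its least upper bound. -/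
def BallContinuousPoset (q : QuasiMetric X) : Prop :=
  ∀ p : X × ℝ≥0,
    {u : X × ℝ≥0 | q.ballWayBelow u p}.Nonempty ∧
    DirectedOn q.ballLE {u : X × ℝ≥0 | q.ballWayBelow u p} ∧
    q.IsBallLUB {u : X × ℝ≥0 | q.ballWayBelow u p} p

/-- A function `χ` is `𝓙`-closed: `ρ(ψ, χ) ≥ χ (colim ψ)` for every bounded ideal `ψ`
possessing a colimit. -/
def JClosed (q : QuasiMetric X) (χ : X → ℝ≥0∞) : Prop :=
  ∀ ψ : X → ℝ≥0∞, q.IsIdeal ψ → q.BoundedWeight ψ → ∀ c, q.IsColimit ψ c → χ c ≤ rho ψ χ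

/-- `(X, d)` is a continuous `𝕁`-algebra: every bounded ideal has a colimit, and there is
a map `⇓` assigning to each `x` a bounded ideal `⇓x` with `ρ(⇓x, φ) = d x (colim φ)` for
all `x` and all bounded ideals `φ`. -/
def ContinuousJAlgebra (q : QuasiMetric X) : Prop :=
  ∃ colim : (X → ℝ≥0∞) → X,
    (∀ φ, q.IsIdeal φ → q.BoundedWeight φ → q.IsColimit φ (colim φ)) ∧
    ∃ w : X → X → ℝ≥0∞,
      (∀ x, q.IsIdeal (w x) ∧ q.BoundedWeight (w x)) ∧
      ∀ (x : X) (φ : X → ℝ≥0∞), q.IsIdeal φ → q.BoundedWeight φ →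
        rho (w x) φ = q.d x (colim φ)

/-- The quasi-metric space of all functions `X → [0,∞]` satisfying a predicate `P`
(e.g. the bounded weights, or the bounded ideals), with the quasi-metric
`ρ(φ, ψ) = sup_x (ψ x ⊖ φ x)`. -/
noncomputable def weightSpace (q : QuasiMetric X) (P : (X → ℝ≥0∞) → Prop) :
    QuasiMetric {φ : X → ℝ≥0∞ // P φ} where
  d φ ψ := rho φ.1 ψ.1
  d_self φ := by simp [rho]
  d_triangle φ ψ χ := by
    refine iSup_le fun x => ?_
    calc χ.1 x - φ.1 x ≤ (χ.1 x - ψ.1 x) + (ψ.1 x - φ.1 x) := tsub_le_tsub_add_tsub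
    _ ≤ rho ψ.1 χ.1 + rho φ.1 ψ.1 :=
        add_le_add (le_iSup (fun y => χ.1 y - ψ.1 y) x) (le_iSup (fun y => ψ.1 y - φ.1 y) x)
    _ = rho φ.1 ψ.1 + rho ψ.1 χ.1 := add_comm _ _
  d_separated φ ψ h1 h2 := by
    apply Subtype.ext
    funext x
    have hx1 : ψ.1 x - φ.1 x ≤ 0 := by
      rw [← h1]; exact le_iSup (fun y => ψ.1 y - φ.1 y) x
    have hx2 : φ.1 x - ψ.1 x ≤ 0 := by
      rw [← h2]; exact le_iSup (fun y => φ.1 y - ψ.1 y) x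
    exact le_antisymm (tsub_eq_zero_iff_le.mp (le_antisymm hx2 zero_le))
      (tsub_eq_zero_iff_le.mp (le_antisymm hx1 zero_le))

end QuasiMetric

namespace QuasiMetric

variable {X : Type u} {q : QuasiMetric X}

theorem ballLE.radius_le {p p' : X × ℝ≥0} (h : q.ballLE p p') : (p'.2 : ℝ≥0∞) ≤ p.2 :=
  le_self_add.trans h

theorem ballLE.add_d_le {p p' : X × ℝ≥0} (h : q.ballLE p p') (z : X) :
    (p'.2 : ℝ≥0∞) + q.d p.1 z ≤ p.2 + q.d p'.1 z :=
  calc (p'.2 : ℝ≥0∞) + q.d p.1 z ≤ p'.2 + (q.d p.1 p'.1 + q.d p'.1 z) := by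
        gcongr; exact q.d_triangle _ _ _
    _ = (p'.2 + q.d p.1 p'.1) + q.d p'.1 z := (add_assoc _ _ _).symm
    _ ≤ p.2 + q.d p'.1 z := by gcongr; exact h

variable {D : Type v} {le : D → D → Prop} {x : D → X} {a : X}

theorem IsYonedaLimit.iInf_iSup_d_self (ha : q.IsYonedaLimit le x a) :
    (⨅ k, ⨆ j, ⨆ (_ : le k j), q.d (x j) a) = 0 := by
  rw [← ha a, q.d_self]

theorem IsYonedaLimit.d_le_of_tail_le (ha : q.IsYonedaLimit le x a) {y : X} {c : ℝ≥0∞} (i : D)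
    (h : ∀ j, le i j → q.d (x j) y ≤ c) : q.d a y ≤ c := by
  rw [ha y]
  exact (iInf_le _ i).trans (iSup₂_le h)

variable {r : D → ℝ≥0}

theorem IsYonedaLimit.ballLE_iInf (ha : q.IsYonedaLimit le x a)
    (hmono : ∀ i j, le i j → q.ballLE (x i, r i) (x j, r j))
    (hdir : ∀ i j, ∃ k, le i k ∧ le j k) (i : D) : q.ballLE (x i, r i) (a, ⨅ i, r i) := by
  have tail_bound : ∀ k, ((⨅ i, r i : ℝ≥0) : ℝ≥0∞) + q.d (x i) a ≤
      r i + ⨆ j, ⨆ (_ : le k j), q.d (x j) a := by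
    intro k
    obtain ⟨j, hij, hkj⟩ := hdir i k
    calc ((⨅ i, r i : ℝ≥0) : ℝ≥0∞) + q.d (x i) a ≤ r j + q.d (x i) a := by
          gcongr; exact_mod_cast ciInf_le (OrderBot.bddBelow _) j
      _ ≤ r i + q.d (x j) a := (hmono i j hij).add_d_le a
      _ ≤ r i + ⨆ j, ⨆ (_ : le k j), q.d (x j) a := by
          gcongr; exact le_iSup₂ (f := fun j (_ : le k j) => q.d (x j) a) j hkj
  calc ((⨅ i, r i : ℝ≥0) : ℝ≥0∞) + q.d (x i) a
      ≤ ⨅ k, ((r i : ℝ≥0∞) + ⨆ j, ⨆ (_ : le k j), q.d (x j) a) := le_iInf tail_bound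
    _ = r i := by rw [← ENNReal.add_iInf, ha.iInf_iSup_d_self, add_zero]

theorem IsYonedaLimit.iInf_ballLE [Nonempty D] (ha : q.IsYonedaLimit le x a)
    (hmono : ∀ i j, le i j → q.ballLE (x i, r i) (x j, r j)) {c : X × ℝ≥0}
    (hc : ∀ i, q.ballLE (x i, r i) c) : q.ballLE (a, ⨅ i, r i) c := by
  obtain ⟨y, s⟩ := c
  show (s : ℝ≥0∞) + q.d a y ≤ ((⨅ i, r i : ℝ≥0) : ℝ≥0∞)
  rw [ENNReal.coe_iInf]
  refine le_iInf fun i => ?_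
  have hd : q.d a y ≤ r i - s := ha.d_le_of_tail_le i fun j hij =>
    ENNReal.le_sub_of_add_le_left ENNReal.coe_ne_top ((hc j).trans (hmono i j hij).radius_le)
  calc (s : ℝ≥0∞) + q.d a y ≤ s + (r i - s) := by gcongr
    _ = r i := add_tsub_cancel_of_le (hc i).radius_le

end QuasiMetric

open QuasiMetric in
/-- if `x` is a Yoneda limit of the net of centers of a directed set of
formal balls (indexed by itself) and `r = inf_i r_i`, then `(x, r)` is the least upper
bound of the directed set in `BX`. -/
theorem stmt0 {X : Type u} (q : QuasiMetric X) {D : Type v}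
    (le : D → D → Prop) (hne : Nonempty D)
    (hdir : ∀ i j, ∃ k, le i k ∧ le j k)
    (x : D → X) (r : D → ℝ≥0)
    (hord : ∀ i j, le i j ↔ q.ballLE (x i, r i) (x j, r j))
    (a : X) (ha : q.IsYonedaLimit le x a) :
    q.IsBallLUB (Set.range fun i => (x i, r i)) (a, ⨅ i, r i) := by
  have hmono i j := (hord i j).mp
  refine ⟨?_, fun c hc => ?_⟩
  · rintro _ ⟨i, rfl⟩
    exact ha.ballLE_iInf hmono hdir i
  · exact ha.iInf_ballLE hmono fun i => hc _ ⟨i, rfl⟩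
end

section
/- Let (X,d) be a quasi-metric space and let {(x_i,r_i)}_{i∈D} be a directed subset of BX, viewed as a monotone net indexed by itself. Suppose (i) inf_{i∈D} r_i = 0, (ii) (b,0) is a least upper bound of {(x_i,r_i)}_{i∈D} in BX, and (iii) for each t < ∞ the directed set {(x_i, t + r_i)}_{i∈D} has a least upper bound in BX. Then b is a Yoneda limit of the forward Cauchy net {x_i}_{i∈D}. -/
/-!
Fix `t < ∞`. The ball `(b, t)` bounds the shifted family `(x i, t + r i)` from above and lies
below its least upper bound `c`: as `inf r = 0`, the radius of `c` is exactly `t`, so `(c.1, 0)`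
bounds the original family and `(b, 0) ⊑ (c.1, 0)`. Hence `(b, t)` is the least upper bound of
the shifted family. If the net is eventually within `t` of `y`, then `(y, 0)` bounds the shifted
family, giving `d b y ≤ t`.
-/

open scoped ENNReal NNReal

universe u v w

namespace QuasiMetric

variable {X : Type*} (q : QuasiMetric X)

theorem ballLE_trans {p p' p'' : X × ℝ≥0} (h : q.ballLE p p') (h' : q.ballLE p' p'') :
    q.ballLE p p'' :=
  calc (p''.2 : ℝ≥0∞) + q.d p.1 p''.1 ≤ p''.2 + (q.d p'.1 p''.1 + q.d p.1 p'.1) := by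
        gcongr; rw [add_comm]; exact q.d_triangle _ _ _
    _ = (p''.2 + q.d p'.1 p''.1) + q.d p.1 p'.1 := (add_assoc _ _ _).symm
    _ ≤ p'.2 + q.d p.1 p'.1 := by gcongr; exact h'
    _ ≤ p.2 := h

variable {q}

theorem dist_le_of_ballLE_zero {p : X × ℝ≥0} {y : X} (h : q.ballLE p (y, 0)) :
    q.d p.1 y ≤ p.2 := by
  simpa [ballLE] using h

theorem IsBallLUB.of_ballLE {S : Set (X × ℝ≥0)} {c p : X × ℝ≥0} (hc : q.IsBallLUB S c)
    (hp : ∀ s ∈ S, q.ballLE s p) (hpc : q.ballLE p c) : q.IsBallLUB S p :=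
  ⟨hp, fun e he => q.ballLE_trans hpc (hc.2 e he)⟩

variable {ι : Type*} {x : ι → X} {r : ι → ℝ≥0}

theorem isBallLUB_shift [Nonempty ι] (hinf : ⨅ i, r i = 0) {b : X}
    (hb : q.IsBallLUB (Set.range fun i => (x i, r i)) (b, 0)) {t : ℝ≥0} {c : X × ℝ≥0}
    (hc : q.IsBallLUB (Set.range fun i => (x i, t + r i)) c) :
    q.IsBallLUB (Set.range fun i => (x i, t + r i)) (b, t) := by
  have hinf' : ⨅ i, (r i : ℝ≥0∞) = 0 := by rw [← ENNReal.coe_iInf, hinf, ENNReal.coe_zero]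
  have hxb (i : ι) : q.d (x i) b ≤ r i := dist_le_of_ballLE_zero (hb.1 _ ⟨i, rfl⟩)
  have hcub (i : ι) : (c.2 : ℝ≥0∞) + q.d (x i) c.1 ≤ t + r i := by
    simpa [ballLE] using hc.1 _ ⟨i, rfl⟩
  have hbt : ∀ s ∈ Set.range fun i => (x i, t + r i), q.ballLE s (b, t) := by
    rintro _ ⟨i, rfl⟩
    simpa [ballLE] using add_le_add_left (hxb i) (t : ℝ≥0∞)
  have ht_le_c : (t : ℝ≥0∞) ≤ c.2 := le_of_add_le_left (hc.2 _ hbt)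
  have hc_le_t : (c.2 : ℝ≥0∞) ≤ t := by
    rw [← add_zero (t : ℝ≥0∞), ← hinf', ENNReal.add_iInf]
    exact le_iInf fun i => le_of_add_le_left (hcub i)
  have hc_eq : (c.2 : ℝ≥0∞) = t := le_antisymm hc_le_t ht_le_c
  have hcentre : ∀ s ∈ Set.range fun i => (x i, r i), q.ballLE s (c.1, 0) := by
    rintro _ ⟨i, rfl⟩
    have := hcub i
    rw [hc_eq] at this
    simpa [ballLE] using (ENNReal.add_le_add_iff_left ENNReal.coe_ne_top).mp this
  have hbc : q.d b c.1 = 0 := nonpos_iff_eq_zero.mp (dist_le_of_ballLE_zero (hb.2 _ hcentre))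
  refine hc.of_ballLE hbt ?_
  simp [ballLE, hbc, hc_eq]

theorem iInf_iSup_dist_le {le : ι → ι → Prop} [Nonempty ι] (hinf : ⨅ i, r i = 0)
    (hanti : ∀ i j, le i j → r j ≤ r i) {b : X} (hxb : ∀ i, q.d (x i) b ≤ r i) (y : X) :
    ⨅ i, ⨆ j, ⨆ (_ : le i j), q.d (x j) y ≤ q.d b y := by
  have hinf' : ⨅ i, (r i : ℝ≥0∞) = 0 := by rw [← ENNReal.coe_iInf, hinf, ENNReal.coe_zero]
  calc ⨅ i, ⨆ j, ⨆ (_ : le i j), q.d (x j) y ≤ ⨅ i, (r i + q.d b y) := by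
        refine iInf_mono fun i => iSup₂_le fun j hij => ?_
        calc q.d (x j) y ≤ q.d (x j) b + q.d b y := q.d_triangle _ _ _
          _ ≤ r i + q.d b y := by gcongr; exact (hxb j).trans (by exact_mod_cast hanti i j hij)
    _ = q.d b y := by rw [← ENNReal.iInf_add, hinf', zero_add]

theorem dist_le_of_isBallLUB_shift {le : ι → ι → Prop}
    (hdir : ∀ i j, ∃ k, le i k ∧ le j k) (hmono : ∀ i j, le i j → q.ballLE (x i, r i) (x j, r j)) {b y : X} {t : ℝ≥0}
    (hbt : q.IsBallLUB (Set.range fun i => (x i, t + r i)) (b, t))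
    {i₀ : ι} (hy : ∀ j, le i₀ j → q.d (x j) y ≤ t) : q.d b y ≤ t := by
  have hyub : ∀ s ∈ Set.range fun i => (x i, t + r i), q.ballLE s (y, 0) := by
    rintro _ ⟨i, rfl⟩
    obtain ⟨k, hik, hi₀k⟩ := hdir i i₀
    have hxik : q.d (x i) (x k) ≤ r i := le_of_add_le_right (hmono i k hik)
    simp only [ballLE, ENNReal.coe_zero, zero_add, ENNReal.coe_add]
    calc q.d (x i) y ≤ q.d (x i) (x k) + q.d (x k) y := q.d_triangle _ _ _
      _ ≤ r i + t := add_le_add hxik (hy k hi₀k)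
      _ = t + r i := add_comm _ _
  exact dist_le_of_ballLE_zero (hbt.2 _ hyub)

end QuasiMetric

open QuasiMetric in
/-- if a directed set of formal balls (indexed by itself) has
`inf_i r_i = 0`, `(b, 0)` as a least upper bound, and each shifted directed set
`{(x_i, t + r_i)}` has a least upper bound, then `b` is a Yoneda limit of the
forward Cauchy net `{x_i}`. -/
theorem stmt1 {X : Type u} (q : QuasiMetric X) {D : Type v}
    (le : D → D → Prop) (hne : Nonempty D)
    (hdir : ∀ i j, ∃ k, le i k ∧ le j k)
    (x : D → X) (r : D → ℝ≥0)
    (hord : ∀ i j, le i j ↔ q.ballLE (x i, r i) (x j, r j))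
    (hinf : (⨅ i, r i) = 0)
    (b : X) (hb : q.IsBallLUB (Set.range fun i => (x i, r i)) (b, 0))
    (ht : ∀ t : ℝ≥0, ∃ c, q.IsBallLUB (Set.range fun i => (x i, t + r i)) c) :
    q.IsYonedaLimit le x b := by
  intro y
  have hxb (i : D) : q.d (x i) b ≤ r i := dist_le_of_ballLE_zero (hb.1 _ ⟨i, rfl⟩)
  have hanti (i j : D) (hij : le i j) : r j ≤ r i := by
    exact_mod_cast le_of_add_le_left ((hord i j).mp hij)
  refine le_antisymm (le_of_forall_gt_imp_ge_of_dense fun s hs => ?_)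
    (iInf_iSup_dist_le hinf hanti hxb y)
  obtain ⟨t, hLt, hts⟩ := ENNReal.lt_iff_exists_nnreal_btwn.mp hs
  obtain ⟨i₀, hi₀⟩ := iInf_lt_iff.mp hLt
  obtain ⟨c, hc⟩ := ht t
  have hy (j : D) (hj : le i₀ j) : q.d (x j) y ≤ t :=
    ((le_iSup₂ (f := fun j (_ : le i₀ j) => q.d (x j) y) j hj).trans_lt hi₀).le
  have hbt := isBallLUB_shift hinf hb hc
  exact (dist_le_of_isBallLUB_shift hdir (fun i j => (hord i j).mp) hbt hy).trans hts.le
end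

section
/- Let φ be a weight of a quasi-metric space (X,d). Then φ is an ideal if and only if inf_{x∈X} φ(x) = 0 and the set Bφ := {(x,r) ∈ BX : φ(x) < r} is a directed subset of BX. -/
open scoped ENNReal NNReal

universe u v w

/-! `ρ(φ, λ) > t` means that `t + φ x < λ x` for some `x`, i.e. that `t + r < λ x` for some
formal ball `(x, r)` of `Bφ`; and a weight `λ` carries such a bound upwards along `⊑`. Hence a
common upper bound in `Bφ` of balls witnessing `ρ(φ, λ) > t` and `ρ(φ, μ) > t` witnesses
`ρ(φ, min(λ, μ)) > t`. Conversely, `(x, r) ∈ Bφ` means `ρ(φ, r ⊖ d(x, -)) > 0`, and a ball of `Bφ`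
witnessing `ρ(φ, min(r ⊖ d(x, -), s ⊖ d(y, -))) > 0` lies above both `(x, r)` and `(y, s)`. -/

namespace QuasiMetric

variable {X : Type u}

-- `Bφ`
def weightBalls (φ : X → ℝ≥0∞) : Set (X × ℝ≥0) := {p | φ p.1 < p.2}

section rho

variable {Y : Type v} {φ ψ : Y → ℝ≥0∞} {t : ℝ≥0∞}

theorem lt_rho_iff : t < rho φ ψ ↔ ∃ y, t + φ y < ψ y := by
  simp only [rho, lt_iSup_iff, lt_tsub_iff_right]

theorem rho_min_le_min_rho (l m : Y → ℝ≥0∞) :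
    rho φ (fun y => min (l y) (m y)) ≤ min (rho φ l) (rho φ m) :=
  le_min (iSup_mono fun _ => tsub_le_tsub_right (min_le_left _ _) _)
    (iSup_mono fun _ => tsub_le_tsub_right (min_le_right _ _) _)

end rho

theorem lt_rho_iff_exists_mem_weightBalls {φ ψ : X → ℝ≥0∞} {t : ℝ≥0∞} :
    t < rho φ ψ ↔ ∃ p ∈ weightBalls φ, t + p.2 < ψ p.1 := by
  rw [lt_rho_iff]
  constructor
  · rintro ⟨x, hx⟩
    obtain ⟨r, hφr, hr⟩ := ENNReal.lt_iff_exists_nnreal_btwn.1 (lt_tsub_iff_left.2 hx)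
    exact ⟨(x, r), hφr, lt_tsub_iff_left.1 hr⟩
  · rintro ⟨⟨x, r⟩, hφr, hr⟩
    exact ⟨x, (add_le_add_right hφr.le t).trans_lt hr⟩

variable (q : QuasiMetric X)

theorem isWeight_tsub_d (x : X) (r : ℝ≥0∞) : q.IsWeight fun z => r - q.d x z := fun a b =>
  calc r - q.d x a ≤ (r - q.d x b) + (q.d x b - q.d x a) := tsub_le_tsub_add_tsub
    _ ≤ (r - q.d x b) + q.d a b := by gcongr; exact tsub_le_iff_left.2 (q.d_triangle x a b)

theorem ballLE_of_lt_tsub {x z : X} {r c : ℝ≥0} (h : (c : ℝ≥0∞) < r - q.d x z) :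
    q.ballLE (x, r) (z, c) :=
  (lt_tsub_iff_right.1 h).le

variable {q}

theorem IsWeight.add_lt_of_ballLE {l : X → ℝ≥0∞} (hl : q.IsWeight l) {p p' : X × ℝ≥0}
    (hp : q.ballLE p p') {t : ℝ≥0∞} (ht : t + p.2 < l p.1) : t + p'.2 < l p'.1 := by
  have hd : q.d p.1 p'.1 ≠ ∞ := ne_top_of_le_ne_top ENNReal.coe_ne_top (le_add_self.trans hp)
  rw [← ENNReal.add_lt_add_iff_right hd]
  calc t + p'.2 + q.d p.1 p'.1 ≤ t + p.2 := by rw [add_assoc]; exact add_le_add_right hp t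
    _ < l p.1 := ht
    _ ≤ l p'.1 + q.d p.1 p'.1 := hl p.1 p'.1

theorem min_rho_le_rho_min_of_directedOn {φ l m : X → ℝ≥0∞}
    (hdir : DirectedOn q.ballLE (weightBalls φ)) (hl : q.IsWeight l) (hm : q.IsWeight m) :
    min (rho φ l) (rho φ m) ≤ rho φ (fun y => min (l y) (m y)) := by
  refine le_of_forall_lt fun t ht => ?_
  obtain ⟨p, hp, hpl⟩ :=
    lt_rho_iff_exists_mem_weightBalls.1 (ht.trans_le (min_le_left _ _))
  obtain ⟨p', hp', hp'm⟩ :=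
    lt_rho_iff_exists_mem_weightBalls.1 (ht.trans_le (min_le_right _ _))
  obtain ⟨b, hb, hpb, hp'b⟩ := hdir p hp p' hp'
  exact lt_rho_iff_exists_mem_weightBalls.2
    ⟨b, hb, lt_min (hl.add_lt_of_ballLE hpb hpl) (hm.add_lt_of_ballLE hp'b hp'm)⟩

theorem directedOn_weightBalls {φ : X → ℝ≥0∞}
    (hmin : ∀ l m : X → ℝ≥0∞, q.IsWeight l → q.IsWeight m →
      min (rho φ l) (rho φ m) ≤ rho φ (fun y => min (l y) (m y))) :
    DirectedOn q.ballLE (weightBalls φ) := by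
  have rho_pos : ∀ p ∈ weightBalls φ, 0 < rho φ fun z => (p.2 : ℝ≥0∞) - q.d p.1 z :=
    fun p hp => lt_rho_iff.2 ⟨p.1, by rwa [zero_add, q.d_self, tsub_zero]⟩
  intro p hp p' hp'
  obtain ⟨b, hb, hlt⟩ := lt_rho_iff_exists_mem_weightBalls.1 <| (lt_min (rho_pos p hp)
    (rho_pos p' hp')).trans_le (hmin _ _ (q.isWeight_tsub_d p.1 p.2) (q.isWeight_tsub_d p'.1 p'.2))
  rw [zero_add, lt_min_iff] at hlt
  exact ⟨b, hb, q.ballLE_of_lt_tsub hlt.1, q.ballLE_of_lt_tsub hlt.2⟩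

end QuasiMetric

open QuasiMetric in
/-- a weight `φ` is an ideal iff `inf_x φ x = 0` and
`Bφ = {(x, r) ∈ BX : φ x < r}` is a directed subset of `BX`. -/
theorem stmt6 {X : Type u} (q : QuasiMetric X) (φ : X → ℝ≥0∞) (hφ : q.IsWeight φ) :
    q.IsIdeal φ ↔
      ((⨅ x, φ x) = 0 ∧
        DirectedOn q.ballLE {p : X × ℝ≥0 | φ p.1 < (p.2 : ℝ≥0∞)}) := by
  constructor
  · rintro ⟨-, hinf, hmin⟩
    exact ⟨hinf, directedOn_weightBalls fun l m hl hm => (hmin l m hl hm).ge⟩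
  · rintro ⟨hinf, hdir⟩
    exact ⟨hφ, hinf, fun l m hl hm =>
      (rho_min_le_min_rho l m).antisymm (min_rho_le_rho_min_of_directedOn hdir hl hm)⟩
end

section
/- Let {x_i}_{i∈D} be a forward Cauchy net in a quasi-metric space (X,d) and let φ = inf_{i∈D} sup_{j≥i} d(−, x_j) be the ideal it generates. Then an element x ∈ X is a Yoneda limit of {x_i}_{i∈D} if and only if x is a colimit of the weight φ. -/
open scoped ENNReal NNReal

universe u v w

/-!
Write `φ z = inf_i sup_{j ≥ i} d z x_j`. For `sup_z (d z y ⊖ φ z) ≤ inf_i sup_{j ≥ i} d x_j y`,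
route `d z y` through a common later term `x_k` of two tails. Conversely, taking `i = j` in
`φ (x_j)` bounds it by the Cauchy tail at `j`, so each tail of `d x_j y` is at most
`sup_z (d z y ⊖ φ z)` plus a Cauchy tail, and the forward Cauchy condition makes the latter vanish.
-/

namespace QuasiMetric

variable {X : Type u} {D : Type v}

noncomputable def tailSup (le : D → D → Prop) (f : D → ℝ≥0∞) (i : D) : ℝ≥0∞ :=
  ⨆ j, ⨆ (_ : le i j), f j

theorem le_tailSup {le : D → D → Prop} {f : D → ℝ≥0∞} {i j : D} (h : le i j) :
    f j ≤ tailSup le f i :=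
  le_iSup₂_of_le j h le_rfl

theorem tailSup_le {le : D → D → Prop} {f : D → ℝ≥0∞} {i : D} {c : ℝ≥0∞}
    (h : ∀ j, le i j → f j ≤ c) : tailSup le f i ≤ c :=
  iSup₂_le h

variable (q : QuasiMetric X) (le : D → D → Prop) (x : D → X)

theorem sub_iInf_tailSup_le_iInf_tailSup (hdir : ∀ i j, ∃ k, le i k ∧ le j k) (y z : X) :
    q.d z y - ⨅ i, tailSup le (fun j => q.d z (x j)) i ≤
      ⨅ i, tailSup le (fun j => q.d (x j) y) i := by
  rw [tsub_le_iff_right]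
  refine ENNReal.le_iInf_add_iInf fun i i' => ?_
  obtain ⟨k, hik, hi'k⟩ := hdir i i'
  calc q.d z y ≤ q.d (x k) y + q.d z (x k) := (q.d_triangle z (x k) y).trans_eq (add_comm _ _)
    _ ≤ tailSup le (fun j => q.d (x j) y) i + tailSup le (fun j => q.d z (x j)) i' :=
        add_le_add (le_tailSup hik) (le_tailSup hi'k)

theorem iInf_tailSup_le_iSup_sub (hx : q.ForwardCauchy le x) (y : X) :
    ⨅ i, tailSup le (fun j => q.d (x j) y) i ≤
      ⨆ z, q.d z y - ⨅ i, tailSup le (fun j => q.d z (x j)) i := by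
  set φ := fun z => ⨅ i, tailSup le (fun j => q.d z (x j)) i
  set R := ⨆ z, q.d z y - φ z
  set cauchyTail := tailSup le fun j => tailSup le (fun k => q.d (x j) (x k)) j
  have hcauchy : ⨅ m, cauchyTail m = 0 := hx
  have htail : ∀ m, tailSup le (fun j => q.d (x j) y) m ≤ R + cauchyTail m := by
    intro m
    refine tailSup_le fun j hj => ?_
    calc q.d (x j) y ≤ (q.d (x j) y - φ (x j)) + φ (x j) := le_tsub_add
      _ ≤ R + tailSup le (fun k => q.d (x j) (x k)) j :=
          add_le_add (le_iSup (fun z => q.d z y - φ z) (x j)) (iInf_le _ j)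
      _ ≤ R + cauchyTail m := add_le_add_right (le_tailSup hj) R
  calc ⨅ m, tailSup le (fun j => q.d (x j) y) m ≤ ⨅ m, (R + cauchyTail m) := iInf_mono htail
    _ = R := by rw [← ENNReal.add_iInf, hcauchy, add_zero]

theorem iInf_tailSup_eq_iSup_sub (hdir : ∀ i j, ∃ k, le i k ∧ le j k)
    (hx : q.ForwardCauchy le x) (y : X) :
    ⨅ i, tailSup le (fun j => q.d (x j) y) i =
      ⨆ z, q.d z y - ⨅ i, tailSup le (fun j => q.d z (x j)) i :=
  le_antisymm (q.iInf_tailSup_le_iSup_sub le x hx y)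
    (iSup_le fun z => q.sub_iInf_tailSup_le_iInf_tailSup le x hdir y z)

end QuasiMetric

open QuasiMetric in
theorem stmt8_general {X : Type u} (q : QuasiMetric X) {D : Type v}
    (le : D → D → Prop) (hle : DirectedPre le)
    (x : D → X) (hx : q.ForwardCauchy le x) (a : X) :
    q.IsYonedaLimit le x a ↔
      q.IsColimit (fun y => ⨅ i, ⨆ j, ⨆ (_ : le i j), q.d y (x j)) a :=
  forall_congr' fun y => Eq.congr_right (q.iInf_tailSup_eq_iSup_sub le x hle.2.2 hx y)

open QuasiMetric in
/-- for a forward Cauchy net `{x_i}` generating the ideal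
`φ = inf_i sup_{j ≥ i} d (−, x_j)`, an element `a` is a Yoneda limit of `{x_i}` iff it is
a colimit of the weight `φ`. -/
theorem stmt8 {X : Type u} (q : QuasiMetric X) {D : Type v}
    (le : D → D → Prop) (hle : DirectedPre le) (hne : Nonempty D)
    (x : D → X) (hx : q.ForwardCauchy le x) (a : X) :
    q.IsYonedaLimit le x a ↔
      q.IsColimit (fun y => ⨅ i, ⨆ j, ⨆ (_ : le i j), q.d y (x j)) a :=
  stmt8_general q le hle x hx a
end

section
/- Let {x_i}_{i∈D} be a forward Cauchy net in a quasi-metric space (X,d_X), let φ = inf_{i∈D} sup_{j≥i} d_X(−, x_j) be the ideal it generates, and let f : (X,d_X) → (Y,d_Y) be a non-expansive map. Then the pushforward weight f^→(φ), given by f^→(φ)(y) = inf_{x∈X} (φ(x) + d_Y(y, f(x))), equals inf_{i∈D} sup_{j≥i} d_Y(−, f(x_j)), the ideal generated by the forward Cauchy net {f(x_i)}_{i∈D} of (Y,d_Y). -/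
open scoped ENNReal NNReal

universe u v w

/-! The weight `ψ` generated by the image net is a weight with `ψ ∘ f ≤ φ`, so
`ψ y ≤ φ x' + d_Y (y, f x')` for every `x'`. Conversely, along a forward Cauchy net `φ (x_k)`
becomes arbitrarily small, so `x' = x_k` with `k ≥ i` large shows that the pushforward at `y`
is at most `ε + sup_{j ≥ i} d_Y (y, f x_j)`. -/

namespace QuasiMetric

variable {X : Type u} {Y : Type v} {D : Type w}

/-- The paper's `inf_i sup_{j ≥ i} d(−, x_j)`, the ideal generated when `x` is forward Cauchy. -/
noncomputable def netWeight (q : QuasiMetric X) (le : D → D → Prop) (x : D → X) (a : X) :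
    ℝ≥0∞ :=
  ⨅ i, ⨆ j, ⨆ (_ : le i j), q.d a (x j)

theorem isWeight_netWeight (q : QuasiMetric X) (le : D → D → Prop) (x : D → X) :
    q.IsWeight (q.netWeight le x) := by
  intro a b
  rw [netWeight, netWeight, ENNReal.iInf_add]
  refine iInf_mono fun i => iSup₂_le fun j hj => ?_
  calc q.d a (x j) ≤ q.d b (x j) + q.d a b := by rw [add_comm]; exact q.d_triangle _ _ _
    _ ≤ (⨆ j, ⨆ (_ : le i j), q.d b (x j)) + q.d a b :=
      add_le_add (le_iSup₂_of_le j hj le_rfl) le_rfl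

theorem netWeight_comp_le (qX : QuasiMetric X) (qY : QuasiMetric Y) {f : X → Y}
    (hf : ∀ a b, qY.d (f a) (f b) ≤ qX.d a b) (le : D → D → Prop) (x : D → X) (a : X) :
    qY.netWeight le (f ∘ x) (f a) ≤ qX.netWeight le x a :=
  iInf_mono fun _ => iSup₂_mono fun j _ => hf a (x j)

theorem ForwardCauchy.exists_netWeight_lt {q : QuasiMetric X} {le : D → D → Prop} {x : D → X}
    (hx : q.ForwardCauchy le x) (hdir : ∀ i j, ∃ k, le i k ∧ le j k) {ε : ℝ≥0∞} (hε : 0 < ε)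
    (i : D) : ∃ k, le i k ∧ q.netWeight le x (x k) < ε := by
  obtain ⟨i₀, hi₀⟩ := iInf_lt_iff.mp (hx.symm ▸ hε :
    (⨅ i, ⨆ j, ⨆ (_ : le i j), ⨆ k, ⨆ (_ : le j k), q.d (x j) (x k)) < ε)
  obtain ⟨k, hi₀k, hik⟩ := hdir i₀ i
  refine ⟨k, hik, lt_of_le_of_lt ?_ hi₀⟩
  exact iInf_le_of_le k (le_iSup₂_of_le k hi₀k le_rfl)

end QuasiMetric

open QuasiMetric in
theorem stmt9_general {X : Type u} {Y : Type v} (qX : QuasiMetric X) (qY : QuasiMetric Y)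
    (f : X → Y) (hf : ∀ x x', qY.d (f x) (f x') ≤ qX.d x x')
    {D : Type w} (le : D → D → Prop) (hle : DirectedPre le)
    (x : D → X) (hx : qX.ForwardCauchy le x) :
    ∀ y : Y,
      (⨅ x' : X, ((⨅ i, ⨆ j, ⨆ (_ : le i j), qX.d x' (x j)) + qY.d y (f x')))
        = ⨅ i, ⨆ j, ⨆ (_ : le i j), qY.d y (f (x j)) := by
  intro y
  refine le_antisymm ?_ (le_iInf fun a => ?_)
  · refine ENNReal.le_of_forall_pos_le_add fun ε hε _ => ?_
    rw [ENNReal.iInf_add]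
    refine le_iInf fun i => ?_
    obtain ⟨k, hik, hk⟩ := hx.exists_netWeight_lt hle.2.2 (ENNReal.coe_pos.2 hε) i
    calc _ ≤ qX.netWeight le x (x k) + qY.d y (f (x k)) := iInf_le _ (x k)
      _ ≤ ε + ⨆ j, ⨆ (_ : le i j), qY.d y (f (x j)) :=
        add_le_add hk.le (le_iSup₂_of_le k hik le_rfl)
      _ = _ := add_comm _ _
  · calc _ ≤ qY.netWeight le (f ∘ x) (f a) + qY.d y (f a) :=
          isWeight_netWeight qY le (f ∘ x) y (f a)
      _ ≤ _ := add_le_add (netWeight_comp_le qX qY hf le x a) le_rfl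

open QuasiMetric in
/-- for a forward Cauchy net `{x_i}` generating the ideal `φ` and a
non-expansive map `f`, the pushforward `f^→(φ)(y) = inf_x (φ x + d_Y (y, f x))` equals
the ideal `inf_i sup_{j ≥ i} d_Y (−, f (x_j))` generated by `{f (x_i)}`. -/
theorem stmt9 {X : Type u} {Y : Type v} (qX : QuasiMetric X) (qY : QuasiMetric Y)
    (f : X → Y) (hf : ∀ x x', qY.d (f x) (f x') ≤ qX.d x x')
    {D : Type w} (le : D → D → Prop) (hle : DirectedPre le) (hne : Nonempty D)
    (x : D → X) (hx : qX.ForwardCauchy le x) :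
    ∀ y : Y,
      (⨅ x' : X, ((⨅ i, ⨆ j, ⨆ (_ : le i j), qX.d x' (x j)) + qY.d y (f x')))
        = ⨅ i, ⨆ j, ⨆ (_ : le i j), qY.d y (f (x j)) :=
  stmt9_general qX qY f hf le hle x hx
end

section
/- Let (X,d) be a quasi-metric space and let 𝓑X denote the set of bounded weights of (X,d), equipped with the quasi-metric ρ(φ,ψ) = sup_{x∈X} (ψ(x) ⊖ φ(x)). If Φ : 𝓑X → [0,∞] is a bounded weight of the quasi-metric space (𝓑X, ρ), then the map x ↦ inf_{φ∈𝓑X} (Φ(φ) + φ(x)) is a bounded weight of (X,d). -/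
open scoped ENNReal NNReal

universe u v w

namespace QuasiMetric

variable {X : Type*} {q : QuasiMetric X}

theorem IsWeight.const_add {φ : X → ℝ≥0∞} (hφ : q.IsWeight φ) (c : ℝ≥0∞) :
    q.IsWeight fun x => c + φ x := fun x y => by
  rw [add_assoc]
  exact add_le_add_right (hφ x y) c

theorem isWeight_iInf {ι : Sort*} {φ : ι → X → ℝ≥0∞} (hφ : ∀ i, q.IsWeight (φ i)) :
    q.IsWeight fun x => ⨅ i, φ i x := fun x y => by
  rw [ENNReal.iInf_add]
  exact le_iInf fun i => (iInf_le _ i).trans (hφ i x y)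

theorem le_rho_add {Y : Type*} (φ ψ : Y → ℝ≥0∞) (y : Y) : ψ y ≤ rho φ ψ + φ y :=
  calc ψ y ≤ (ψ y - φ y) + φ y := le_tsub_add
    _ ≤ rho φ ψ + φ y := add_le_add_left (le_iSup (fun y => ψ y - φ y) y) _

theorem BoundedWeight.of_le_const_add {φ χ : X → ℝ≥0∞} (hφ : q.BoundedWeight φ) (r : ℝ≥0)
    (h : ∀ x, φ x ≤ r + χ x) : q.BoundedWeight χ := by
  obtain ⟨s, a, ha⟩ := hφ
  refine ⟨s + r, a, fun x => ?_⟩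
  calc q.d x a ≤ s + φ x := ha x
    _ ≤ s + (r + χ x) := add_le_add_right (h x) _
    _ = ↑(s + r) + χ x := by push_cast; rw [add_assoc]

end QuasiMetric

open QuasiMetric in
theorem stmt12_general {X : Type u} (q : QuasiMetric X)
    (Φ : {φ : X → ℝ≥0∞ // q.IsWeight φ ∧ q.BoundedWeight φ} → ℝ≥0∞)
    (hΦb : (q.weightSpace fun φ => q.IsWeight φ ∧ q.BoundedWeight φ).BoundedWeight Φ) :
    (q.IsWeight fun x => ⨅ φ : {φ : X → ℝ≥0∞ // q.IsWeight φ ∧ q.BoundedWeight φ},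
        Φ φ + φ.1 x) ∧
    (q.BoundedWeight fun x => ⨅ φ : {φ : X → ℝ≥0∞ // q.IsWeight φ ∧ q.BoundedWeight φ},
        Φ φ + φ.1 x) := by
  refine ⟨isWeight_iInf fun φ => φ.2.1.const_add (Φ φ), ?_⟩
  obtain ⟨r, ψ, hψ⟩ := hΦb
  -- `ρ(φ, ψ) ≤ r + Φ φ` bounds `ψ` above by `r` plus the infimum, and `ψ` is bounded.
  refine ψ.2.2.of_le_const_add r fun x => ?_
  rw [ENNReal.add_iInf]
  refine le_iInf fun φ => ?_
  calc ψ.1 x ≤ rho φ.1 ψ.1 + φ.1 x := le_rho_add φ.1 ψ.1 x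
    _ ≤ r + Φ φ + φ.1 x := add_le_add_left (hψ φ) _
    _ = r + (Φ φ + φ.1 x) := add_assoc _ _ _

open QuasiMetric in
/-- if `Φ` is a bounded weight of the quasi-metric space `𝓑X` of bounded
weights of `(X, d)` (with quasi-metric `ρ`), then `x ↦ inf_{φ ∈ 𝓑X} (Φ φ + φ x)` is a
bounded weight of `(X, d)`. -/
theorem stmt12 {X : Type u} (q : QuasiMetric X)
    (Φ : {φ : X → ℝ≥0∞ // q.IsWeight φ ∧ q.BoundedWeight φ} → ℝ≥0∞)
    (hΦw : (q.weightSpace fun φ => q.IsWeight φ ∧ q.BoundedWeight φ).IsWeight Φ)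
    (hΦb : (q.weightSpace fun φ => q.IsWeight φ ∧ q.BoundedWeight φ).BoundedWeight Φ) :
    (q.IsWeight fun x => ⨅ φ : {φ : X → ℝ≥0∞ // q.IsWeight φ ∧ q.BoundedWeight φ},
        Φ φ + φ.1 x) ∧
    (q.BoundedWeight fun x => ⨅ φ : {φ : X → ℝ≥0∞ // q.IsWeight φ ∧ q.BoundedWeight φ},
        Φ φ + φ.1 x) :=
  stmt12_general q Φ hΦb
end

section
/- Let (X,d) be a quasi-metric space and let 𝓙X denote the set of bounded ideals of (X,d), equipped with the quasi-metric ρ(φ,ψ) = sup_{x∈X} (ψ(x) ⊖ φ(x)). If Φ : 𝓙X → [0,∞] is a bounded ideal of the quasi-metric space (𝓙X, ρ), then the map x ↦ inf_{φ∈𝓙X} (Φ(φ) + φ(x)) is a bounded ideal of (X,d). -/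
open scoped ENNReal NNReal

universe u v w

/-!
Write `ψ x = ⨅ φ, Φ φ + φ x`. Exchanging the supremum over `x` with the infimum over `φ`
gives `ρ(ψ, χ) = ρ_𝓙(Φ, χ̂)` for every `χ`, where `χ̂ φ = ρ(φ, χ)` is a weight on `𝓙X`.
Since each `φ` is an ideal, `(min λ μ)^ = min λ̂ μ̂` for weights `λ, μ`, so the ideal
property of `Φ` transfers to `ψ`; `inf ψ = inf Φ = 0` because `inf φ = 0`. Boundedness:
if `ρ(φ, Ψ₀) ≤ r + Φ φ` and `d x a ≤ s + Ψ₀ x`, then `d x a ≤ s + r + Φ φ + φ x` for all `φ`.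
-/

namespace QuasiMetric

section rho

variable {Y ι : Type*}

theorem rho_triangle (φ ψ χ : Y → ℝ≥0∞) : rho φ χ ≤ rho φ ψ + rho ψ χ :=
  iSup_le fun y => calc
    χ y - φ y ≤ (χ y - ψ y) + (ψ y - φ y) := tsub_le_tsub_add_tsub
    _ ≤ rho ψ χ + rho φ ψ :=
      add_le_add (le_iSup (fun y => χ y - ψ y) y) (le_iSup (fun y => ψ y - φ y) y)
    _ = rho φ ψ + rho ψ χ := add_comm _ _

theorem apply_le_add_rho (φ ψ : Y → ℝ≥0∞) (y : Y) : ψ y ≤ φ y + rho φ ψ :=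
  tsub_le_iff_left.mp (le_iSup (fun y => ψ y - φ y) y)

theorem rho_iInf_add (Φ : ι → ℝ≥0∞) (F : ι → Y → ℝ≥0∞) (χ : Y → ℝ≥0∞) :
    rho (fun y => ⨅ i, Φ i + F i y) χ = rho Φ (fun i => rho (F i) χ) := calc
  rho (fun y => ⨅ i, Φ i + F i y) χ = ⨆ y, ⨆ i, χ y - (Φ i + F i y) :=
    iSup_congr fun _ => ENNReal.sub_iInf
  _ = ⨆ i, ⨆ y, χ y - (Φ i + F i y) := iSup_comm
  _ = ⨆ i, rho (F i) χ - Φ i := by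
    refine iSup_congr fun i => ?_
    simp only [rho, ENNReal.iSup_sub, add_comm (Φ i), tsub_add_eq_tsub_tsub]

theorem iInf_iInf_add (Φ : ι → ℝ≥0∞) {F : ι → Y → ℝ≥0∞}
    (hF : ∀ i, ⨅ y, F i y = 0) : ⨅ y, ⨅ i, Φ i + F i y = ⨅ i, Φ i := by
  rw [iInf_comm]
  refine iInf_congr fun i => ?_
  rw [← ENNReal.add_iInf, hF i, add_zero]

end rho

variable {X : Type*} (q : QuasiMetric X) {ι : Type*}

theorem isWeight_iInf_add (Φ : ι → ℝ≥0∞) {F : ι → X → ℝ≥0∞} (hF : ∀ i, q.IsWeight (F i)) :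
    q.IsWeight fun x => ⨅ i, Φ i + F i x := by
  intro x y
  rw [ENNReal.iInf_add]
  refine iInf_mono fun i => ?_
  rw [add_assoc]
  gcongr
  exact hF i x y

theorem isWeight_rho_right (P : (X → ℝ≥0∞) → Prop) (χ : X → ℝ≥0∞) :
    (q.weightSpace P).IsWeight fun φ => rho φ.1 χ := fun φ φ' => calc
  rho φ.1 χ ≤ rho φ.1 φ'.1 + rho φ'.1 χ := rho_triangle _ _ _
  _ = rho φ'.1 χ + rho φ.1 φ'.1 := add_comm _ _

variable {q} {P : (X → ℝ≥0∞) → Prop} {Φ : {φ // P φ} → ℝ≥0∞}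

theorem isIdeal_iInf_add (hP : ∀ φ, P φ → q.IsIdeal φ) (hΦ : (q.weightSpace P).IsIdeal Φ) :
    q.IsIdeal fun x => ⨅ φ : {φ // P φ}, Φ φ + φ.1 x := by
  refine ⟨q.isWeight_iInf_add Φ fun φ => (hP _ φ.2).1,
    (iInf_iInf_add Φ fun φ => (hP _ φ.2).2.1).trans hΦ.2.1, fun l m hl hm => ?_⟩
  have hmin : (fun φ : {φ // P φ} => rho φ.1 fun x => min (l x) (m x)) =
      fun φ => min (rho φ.1 l) (rho φ.1 m) :=
    funext fun φ => (hP _ φ.2).2.2 l m hl hm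
  simp only [rho_iInf_add Φ Subtype.val, hmin]
  exact hΦ.2.2 _ _ (q.isWeight_rho_right P l) (q.isWeight_rho_right P m)

theorem boundedWeight_iInf_add (hP : ∀ φ, P φ → q.BoundedWeight φ)
    (hΦ : (q.weightSpace P).BoundedWeight Φ) :
    q.BoundedWeight fun x => ⨅ φ : {φ // P φ}, Φ φ + φ.1 x := by
  obtain ⟨r, Ψ₀, hr⟩ := hΦ
  obtain ⟨s, a, hs⟩ := hP _ Ψ₀.2
  refine ⟨s + r, a, fun x => ?_⟩
  rw [ENNReal.add_iInf]
  refine le_iInf fun φ => calc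
    q.d x a ≤ s + Ψ₀.1 x := hs x
    _ ≤ s + (φ.1 x + (r + Φ φ)) := by
      gcongr
      exact (apply_le_add_rho φ.1 Ψ₀.1 x).trans (add_le_add le_rfl (hr φ))
    _ = ((s + r : ℝ≥0) : ℝ≥0∞) + (Φ φ + φ.1 x) := by push_cast; ring

end QuasiMetric

open QuasiMetric in
/-- if `Φ` is a bounded ideal of the quasi-metric space `𝓙X` of bounded
ideals of `(X, d)` (with quasi-metric `ρ`), then `x ↦ inf_{φ ∈ 𝓙X} (Φ φ + φ x)` is a
bounded ideal of `(X, d)`. -/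
theorem stmt13 {X : Type u} (q : QuasiMetric X)
    (Φ : {φ : X → ℝ≥0∞ // q.IsIdeal φ ∧ q.BoundedWeight φ} → ℝ≥0∞)
    (hΦi : (q.weightSpace fun φ => q.IsIdeal φ ∧ q.BoundedWeight φ).IsIdeal Φ)
    (hΦb : (q.weightSpace fun φ => q.IsIdeal φ ∧ q.BoundedWeight φ).BoundedWeight Φ) :
    (q.IsIdeal fun x => ⨅ φ : {φ : X → ℝ≥0∞ // q.IsIdeal φ ∧ q.BoundedWeight φ},
        Φ φ + φ.1 x) ∧
    (q.BoundedWeight fun x => ⨅ φ : {φ : X → ℝ≥0∞ // q.IsIdeal φ ∧ q.BoundedWeight φ},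
        Φ φ + φ.1 x) :=
  ⟨isIdeal_iInf_add (fun _ h => h.1) hΦi, boundedWeight_iInf_add (fun _ h => h.2) hΦb⟩
end
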